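/- arXiv:2210.04080 — 4 statements merged into one kernel-verified Lean document; each statement's English description precedes it below -/
import Mathlib

section
/- For every real number x > 0, the quantity (1+x) / ((x^2+x+2)/(x+2)) is at most (5+4√2)/7, with equality when x = √2. -/
theorem stmt_0 :
    (∀ x : ℝ, 0 < x →
      (1 + x) / ((x ^ 2 + x + 2) / (x + 2)) ≤ (5 + 4 * Real.sqrt 2) / 7) ∧
    (1 + Real.sqrt 2) / (((Real.sqrt 2) ^ 2 + Real.sqrt 2 + 2) / (Real.sqrt 2 + 2))
      = (5 + 4 * Real.sqrt 2) / 7 := by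
  have hs : Real.sqrt 2 ^ 2 = 2 := Real.sq_sqrt (by norm_num)
  have hsn : (0:ℝ) ≤ Real.sqrt 2 := Real.sqrt_nonneg 2
  have hs1 : (1:ℝ) < Real.sqrt 2 := by nlinarith
  constructor
  · intro x hx
    have hd : 0 < (x ^ 2 + x + 2) / (x + 2) := by positivity
    rw [div_le_div_iff₀ hd (by norm_num), ← mul_div_assoc, le_div_iff₀ (by linarith)]
    nlinarith [sq_nonneg (x - Real.sqrt 2), sq_nonneg x]
  · rw [div_eq_div_iff (by positivity) (by norm_num), ← mul_div_assoc,
      eq_div_iff (by nlinarith)]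
    nlinarith
end

section
/- For every real number d ≥ 0, one has 1 + 2d/(2 + d + d^2) ≤ (5 + 4√2)/7, with equality at d = √2. -/
theorem stmt_1 :
    (∀ d : ℝ, 0 ≤ d → 1 + 2 * d / (2 + d + d ^ 2) ≤ (5 + 4 * Real.sqrt 2) / 7) ∧
    1 + 2 * Real.sqrt 2 / (2 + Real.sqrt 2 + (Real.sqrt 2) ^ 2) = (5 + 4 * Real.sqrt 2) / 7 := by
  have hs : Real.sqrt 2 ^ 2 = 2 := Real.sq_sqrt (by norm_num)
  have hs0 : (0:ℝ) ≤ Real.sqrt 2 := Real.sqrt_nonneg 2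
  constructor
  · intro d hd
    have hpos : (0:ℝ) < 2 + d + d ^ 2 := by nlinarith
    have h : 2 * d / (2 + d + d ^ 2) ≤ (4 * Real.sqrt 2 - 2) / 7 := by
      rw [div_le_div_iff₀ hpos (by norm_num)]
      nlinarith [sq_nonneg (d - Real.sqrt 2), sq_nonneg (d * Real.sqrt 2 - 2), hpos, mul_nonneg hd hs0]
    linarith
  · have hpos : (0:ℝ) < 2 + Real.sqrt 2 + Real.sqrt 2 ^ 2 := by nlinarith
    field_simp
    nlinarith [hs, hs0]
end

section
/- For every real number v with 0 < v ≤ 1, one has (1+v)/(1 + v(2v−1)) ≤ (5 + 4√2)/7, with equality at v = √2 − 1. -/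
theorem stmt_2 :
    (∀ v : ℝ, 0 < v → v ≤ 1 →
      (1 + v) / (1 + v * (2 * v - 1)) ≤ (5 + 4 * Real.sqrt 2) / 7) ∧
    (1 + (Real.sqrt 2 - 1)) / (1 + (Real.sqrt 2 - 1) * (2 * (Real.sqrt 2 - 1) - 1))
      = (5 + 4 * Real.sqrt 2) / 7 := by
  have hs : Real.sqrt 2 ^ 2 = 2 := Real.sq_sqrt (by norm_num)
  have hs1 : 1 < Real.sqrt 2 := by nlinarith [Real.sqrt_nonneg 2]
  constructor
  · intro v hv hv1
    have hd : 0 < 1 + v * (2 * v - 1) := by nlinarith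
    rw [div_le_div_iff₀ hd (by norm_num)]
    nlinarith [sq_nonneg (v - (Real.sqrt 2 - 1)), sq_nonneg v]
  · have hd : 1 + (Real.sqrt 2 - 1) * (2 * (Real.sqrt 2 - 1) - 1) ≠ 0 := by nlinarith
    rw [div_eq_div_iff hd (by norm_num)]
    nlinarith [sq_nonneg (Real.sqrt 2), (by rw [show (3:ℕ) = 2 + 1 from rfl, pow_succ, hs] : Real.sqrt 2 ^ 3 = 2 * Real.sqrt 2)]
end

section
/- For every real number d with 0 ≤ d ≤ 1, one has (3+d)(4+d)/(4 + d + d^2) ≤ 5/3 + (8/3)√(2/5), with equality at d = (2/3)(√10 − 2). -/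
theorem stmt_8 :
    (∀ d : ℝ, 0 ≤ d → d ≤ 1 →
      (3 + d) * (4 + d) / (4 + d + d ^ 2) ≤ 5 / 3 + 8 / 3 * Real.sqrt (2 / 5)) ∧
    (3 + (2 / 3 : ℝ) * (Real.sqrt 10 - 2)) * (4 + (2 / 3 : ℝ) * (Real.sqrt 10 - 2)) /
        (4 + (2 / 3 : ℝ) * (Real.sqrt 10 - 2) + ((2 / 3 : ℝ) * (Real.sqrt 10 - 2)) ^ 2)
      = 5 / 3 + 8 / 3 * Real.sqrt (2 / 5) := by
  have hs0 : (0:ℝ) ≤ Real.sqrt 10 := Real.sqrt_nonneg _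
  have hs : Real.sqrt 10 ^ 2 = 10 := Real.sq_sqrt (by norm_num)
  have h25 : Real.sqrt 25 = 5 := by
    rw [show (25:ℝ) = 5 ^ 2 by norm_num, Real.sqrt_sq (by norm_num)]
  have hq : Real.sqrt (2 / 5) = Real.sqrt 10 / 5 := by
    rw [show (2/5:ℝ) = 10 / 25 by norm_num, Real.sqrt_div (by norm_num), h25]
  set s := Real.sqrt 10 with hsdef
  have hs3 : (3:ℝ) ≤ s := by nlinarith [hs, hs0]
  constructor
  · intro d hd0 hd1
    have hden : (0:ℝ) < 4 + d + d ^ 2 := by nlinarith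
    rw [hq, div_le_iff₀ hden]
    nlinarith [sq_nonneg (d - 2/3*(s-2)), hs, hs3, sq_nonneg d, mul_nonneg hd0 hd0]
  · have hden : (4 + (2 / 3 : ℝ) * (s - 2) + ((2 / 3 : ℝ) * (s - 2)) ^ 2) ≠ 0 := by
      nlinarith [hs, hs3]
    rw [hq, div_eq_iff hden]
    linear_combination (-8 * (4 * s - 5) / 135) * hs
end
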